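/- The Frobenius distance between the normalized adjacency matrices is controlled by the cross-class edges: ‖Ã*_rw − Ã_rw‖_F ≤ (1 + √N) · ‖Δ‖_F, where Δ := A − A*. -/

import Mathlib

open Matrix BigOperators Finset

noncomputable def frobNorm {m n : Type*} [Fintype m] [Fintype n] (M : Matrix m n ℝ) : ℝ :=
  Real.sqrt (∑ i, ∑ j, (M i j) ^ 2)

noncomputable def rowNorm {n : Type*} [Fintype n] (v : n → ℝ) : ℝ :=
  Real.sqrt (∑ j, (v j) ^ 2)

noncomputable def specNorm {m n : Type*} [Fintype m] [Fintype n] [DecidableEq n]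
    (M : Matrix m n ℝ) : ℝ :=
  ‖LinearMap.toContinuousLinearMap (Matrix.toEuclideanLin M)‖

noncomputable def arw {N : ℕ} (A : Matrix (Fin N) (Fin N) ℝ) : Matrix (Fin N) (Fin N) ℝ :=
  Matrix.of fun i j => (A + 1) i j / ((∑ k, A i k) + 1)

def astar {N C : ℕ} (A : Matrix (Fin N) (Fin N) ℝ) (y : Fin N → Fin C) :
    Matrix (Fin N) (Fin N) ℝ :=
  Matrix.of fun i j => if y i = y j then A i j else 0

noncomputable def gcn {N M₀ H₁ H : ℕ} (σ1 σ2 : ℝ → ℝ)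
    (S : Matrix (Fin N) (Fin N) ℝ) (X : Matrix (Fin N) (Fin M₀) ℝ)
    (Θ1 : Matrix (Fin M₀) (Fin H₁) ℝ) (Θ2 : Matrix (Fin H₁) (Fin H) ℝ) :
    Matrix (Fin N) (Fin H) ℝ :=
  (S * ((S * X * Θ1).map σ1) * Θ2).map σ2

def oneHot {N C : ℕ} (y : Fin N → Fin C) : Matrix (Fin N) (Fin C) ℝ :=
  Matrix.of fun i c => if y i = c then 1 else 0

/-! Row `i` of `Ã*_rw − Ã_rw` equals `(dᵢ + 1)⁻¹ (δᵢ Ã*_rw,i − Δᵢ)`, where `dᵢ` is the degree of `i`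
in `A` and `δᵢ = ∑ₖ Δᵢₖ` its number of cross-class edges. As `dᵢ + 1 ≥ 1`, a row of `Ã*_rw` has norm at
most `‖Ã*_rw‖₂ ≤ 1`, and `|δᵢ| ≤ √N ‖Δᵢ‖` by Cauchy–Schwarz, each row of the difference has norm at
most `(1 + √N) ‖Δᵢ‖`; summing the squares over the rows gives the Frobenius bound. -/

open scoped Matrix.Norms.L2Operator

section RowNorms

variable {m n : Type*} [Fintype m] [Fintype n]

lemma rowNorm_eq_norm_toLp (v : n → ℝ) : rowNorm v = ‖WithLp.toLp 2 v‖ := by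
  simp [rowNorm, EuclideanSpace.norm_eq]

lemma abs_sum_le_sqrt_card_mul_rowNorm (v : n → ℝ) :
    |∑ j, v j| ≤ √(Fintype.card n) * rowNorm v := by
  rw [rowNorm, ← Real.sqrt_mul (Nat.cast_nonneg _)]
  exact Real.abs_le_sqrt (sq_sum_le_card_mul_sum_sq (s := univ))

lemma frobNorm_eq_sqrt_sum_rowNorm_sq (M : Matrix m n ℝ) :
    frobNorm M = √(∑ i, rowNorm (M i) ^ 2) := by
  simp only [frobNorm, rowNorm, Real.sq_sqrt (sum_nonneg fun _ _ => sq_nonneg _)]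

lemma frobNorm_le_mul_of_rowNorm_le {M P : Matrix m n ℝ} {c : ℝ} (hc : 0 ≤ c)
    (h : ∀ i, rowNorm (M i) ≤ c * rowNorm (P i)) : frobNorm M ≤ c * frobNorm P := by
  rw [frobNorm_eq_sqrt_sum_rowNorm_sq, frobNorm_eq_sqrt_sum_rowNorm_sq, ← Real.sqrt_sq hc,
    ← Real.sqrt_mul (sq_nonneg c), mul_sum]
  refine Real.sqrt_le_sqrt (sum_le_sum fun i _ => ?_)
  rw [← mul_pow]
  exact pow_le_pow_left₀ (Real.sqrt_nonneg _) (h i) 2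

lemma specNorm_eq_l2_opNorm [DecidableEq n] (M : Matrix m n ℝ) : specNorm M = ‖M‖ := rfl

-- A row of `M` is a column of `Mᴴ`, and `‖Mᴴ‖ = ‖M‖`.
lemma rowNorm_le_specNorm [DecidableEq n] (M : Matrix m n ℝ) (i : m) :
    rowNorm (M i) ≤ specNorm M := by
  classical
  have hcol : M i = Mᴴ *ᵥ Pi.single i 1 := by
    ext j
    simp
  rw [rowNorm_eq_norm_toLp, specNorm_eq_l2_opNorm, ← l2_opNorm_conjTranspose, hcol]
  simpa using l2_opNorm_mulVec Mᴴ (EuclideanSpace.single i 1)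

end RowNorms

section NormalizedAdjacency

variable {N : ℕ}

lemma arw_sub_arw_row (A B : Matrix (Fin N) (Fin N) ℝ) (i : Fin N)
    (hA : ∑ k, A i k + 1 ≠ 0) (hB : ∑ k, B i k + 1 ≠ 0) :
    (arw B - arw A) i = (∑ k, A i k + 1)⁻¹ • ((∑ k, (A - B) i k) • arw B i - (A - B) i) := by
  ext j
  simp only [arw, Matrix.sub_apply, Matrix.add_apply, Matrix.of_apply, Pi.sub_apply,
    Pi.smul_apply, smul_eq_mul, sum_sub_distrib]
  field_simp
  ring

lemma rowNorm_arw_sub_arw_le (A B : Matrix (Fin N) (Fin N) ℝ) (i : Fin N)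
    (hA : 0 ≤ ∑ k, A i k) (hB : ∑ k, B i k + 1 ≠ 0) (hBrow : rowNorm (arw B i) ≤ 1) :
    rowNorm ((arw B - arw A) i) ≤ (1 + √N) * rowNorm ((A - B) i) := by
  set δ := ∑ k, (A - B) i k
  have hd : 1 ≤ ∑ k, A i k + 1 := by linarith
  have hδ : |δ| ≤ √N * rowNorm ((A - B) i) := by
    simpa only [Fintype.card_fin] using abs_sum_le_sqrt_card_mul_rowNorm ((A - B) i)
  rw [arw_sub_arw_row A B i (by linarith) hB]
  simp only [rowNorm_eq_norm_toLp, WithLp.toLp_smul, WithLp.toLp_sub] at hδ hBrow ⊢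
  set s := WithLp.toLp 2 (arw B i)
  set Δ := WithLp.toLp 2 ((A - B) i)
  calc ‖(∑ k, A i k + 1)⁻¹ • (δ • s - Δ)‖
      ≤ ‖δ • s - Δ‖ := by
        rw [norm_smul, Real.norm_of_nonneg (by positivity)]
        exact mul_le_of_le_one_left (norm_nonneg _) (inv_le_one_of_one_le₀ hd)
    _ ≤ |δ| * ‖s‖ + ‖Δ‖ := by simpa [norm_smul] using norm_sub_le (δ • s) Δ
    _ ≤ |δ| + ‖Δ‖ := by gcongr; exact mul_le_of_le_one_right (abs_nonneg δ) hBrow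
    _ ≤ (1 + √N) * ‖Δ‖ := by linarith

lemma astar_nonneg {C : ℕ} {A : Matrix (Fin N) (Fin N) ℝ} (hA : ∀ i j, 0 ≤ A i j)
    (y : Fin N → Fin C) (i j : Fin N) : 0 ≤ astar A y i j := by
  simp only [astar, of_apply]
  split_ifs
  exacts [hA i j, le_rfl]

end NormalizedAdjacency

/-- The Frobenius distance between the normalized adjacency matrices is controlled by the
cross-class edges: `‖Ã*_rw − Ã_rw‖_F ≤ (1 + √N)·‖Δ‖_F`. -/
theorem normalized_adjacency_discrepancy
    {N C : ℕ}
    (A : Matrix (Fin N) (Fin N) ℝ)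
    (y : Fin N → Fin C)
    (hA : ∀ i j, 0 ≤ A i j)
    (hAstarRw : specNorm (arw (astar A y)) ≤ 1) :
    frobNorm (arw (astar A y) - arw A) ≤
      (1 + Real.sqrt N) * frobNorm (A - astar A y) := by
  have hrow (i : Fin N) := rowNorm_arw_sub_arw_le A (astar A y) i
    (sum_nonneg fun k _ => hA i k)
    (add_pos_of_nonneg_of_pos (sum_nonneg fun k _ => astar_nonneg hA y i k) one_pos).ne'
    ((rowNorm_le_specNorm _ i).trans hAstarRw)
  exact frobNorm_le_mul_of_rowNorm_le (by positivity) hrow
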